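/- arXiv:2408.06817 — 3 statements merged into one kernel-verified Lean document; each statement's English description precedes it below -/
import Mathlib

section
/- Let p be a prime, k ≥ 0 an integer, and r an integer with 0 ≤ r < p. Then F_p(kp + r) − F_p(kp) = C(r+1, 2) · (F_p(k+1) − F_p(k)). -/
def Fcount (p n : ℕ) : ℕ :=
  ((Finset.range n ×ˢ Finset.range n).filter
    (fun mk => mk.2 ≤ mk.1 ∧ ¬ (p ∣ Nat.choose mk.1 mk.2))).card

/-! By Lucas's theorem, writing `a = b p + c` with `c < p`, the coefficient `C(k p + j, a)` with
`j < p` is prime to `p` exactly when `c ≤ j` and `p ∤ C(k, b)`. Hence row `k p + j` of Pascal's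
triangle has `j + 1` times as many entries prime to `p` as row `k`, and summing over the rows
`k p, …, k p + r - 1` gives the factor `1 + 2 + ⋯ + r = C(r + 1, 2)`. -/

open Finset

def rowCount (p m : ℕ) : ℕ := #{a ∈ range (m + 1) | ¬ p ∣ m.choose a}

lemma Fcount_eq_sum_rowCount (p n : ℕ) : Fcount p n = ∑ m ∈ range n, rowCount p m := by
  rw [Fcount, card_filter, sum_product]
  refine sum_congr rfl fun m hm => ?_
  rw [← card_filter, rowCount]
  congr 1
  ext a
  simp only [mem_filter, mem_range] at hm ⊢
  constructor <;> rintro ⟨ha, h⟩ <;> omega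

lemma Fcount_succ (p n : ℕ) : Fcount p (n + 1) = Fcount p n + rowCount p n := by
  simp only [Fcount_eq_sum_rowCount, sum_range_succ]

lemma le_of_not_dvd_choose {p n a : ℕ} (h : ¬ p ∣ n.choose a) : a ≤ n :=
  not_lt.mp fun han => h (Nat.choose_eq_zero_of_lt han ▸ dvd_zero p)

namespace Nat.Prime

variable {p n a : ℕ}

lemma not_dvd_choose_iff_le (hp : p.Prime) (hn : n < p) : ¬ p ∣ n.choose a ↔ a ≤ n :=
  ⟨le_of_not_dvd_choose, fun ha => (hp.coprime_iff_not_dvd).mp (hp.coprime_choose_of_lt hn ha)⟩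

lemma not_dvd_choose_iff (hp : p.Prime) :
    ¬ p ∣ n.choose a ↔ a % p ≤ n % p ∧ ¬ p ∣ (n / p).choose (a / p) := by
  have := Fact.mk hp
  rw [(Choose.choose_modEq_choose_mod_mul_choose_div_nat).dvd_iff dvd_rfl, hp.dvd_mul, not_or,
    hp.not_dvd_choose_iff_le (n.mod_lt hp.pos)]

end Nat.Prime

lemma Nat.mul_add_div_of_lt {p b c : ℕ} (hc : c < p) : (b * p + c) / p = b := by
  rw [Nat.add_div_of_dvd_right (dvd_mul_left p b), Nat.div_eq_of_lt hc,
    Nat.mul_div_cancel b (by omega), add_zero]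

lemma rowCount_eq_mul (p n : ℕ) (hp : p.Prime) :
    rowCount p n = (n % p + 1) * rowCount p (n / p) := by
  rw [rowCount, rowCount, ← card_range (n % p + 1), ← card_product]
  have hnp := n.mod_lt hp.pos
  refine card_nbij' (fun a => (a % p, a / p)) (fun x => x.2 * p + x.1) ?_ ?_ ?_ ?_
  · intro a ha
    simp only [coe_filter, coe_product, Set.mem_ofPred_eq, Set.mem_prod, mem_coe, mem_range] at ha ⊢
    obtain ⟨hmod, hdiv⟩ := hp.not_dvd_choose_iff.mp ha.2
    exact ⟨by omega, Nat.lt_succ_of_le (le_of_not_dvd_choose hdiv), hdiv⟩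
  · rintro ⟨c, b⟩ hx
    simp only [coe_filter, coe_product, Set.mem_ofPred_eq, Set.mem_prod, mem_coe, mem_range] at hx
    obtain ⟨hc, -, hb⟩ := hx
    have hcp : c < p := by omega
    have hndvd : ¬ p ∣ n.choose (b * p + c) := hp.not_dvd_choose_iff.mpr
      (by rw [Nat.mul_add_mod_of_lt hcp, Nat.mul_add_div_of_lt hcp]; exact ⟨by omega, hb⟩)
    simp only [coe_filter, Set.mem_ofPred_eq, mem_range]
    exact ⟨Nat.lt_succ_of_le (le_of_not_dvd_choose hndvd), hndvd⟩
  · intro a _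
    exact Nat.div_add_mod' a p
  · rintro ⟨c, b⟩ hx
    simp only [coe_product, Set.mem_prod, mem_coe, mem_range] at hx
    have hcp : c < p := by omega
    exact Prod.ext (Nat.mul_add_mod_of_lt hcp) (Nat.mul_add_div_of_lt hcp)

lemma rowCount_mul_add (p k j : ℕ) (hp : p.Prime) (hj : j < p) :
    rowCount p (k * p + j) = (j + 1) * rowCount p k := by
  rw [rowCount_eq_mul _ _ hp, Nat.mul_add_mod_of_lt hj, Nat.mul_add_div_of_lt hj]

lemma sum_range_succ_eq_choose_two (r : ℕ) : ∑ j ∈ range r, (j + 1) = (r + 1).choose 2 := by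
  rw [Nat.choose_two_right, ← sum_range_id, sum_range_succ', add_zero]

lemma Fcount_mul_add (p k r : ℕ) (hp : p.Prime) (hr : r < p) :
    Fcount p (k * p + r) = Fcount p (k * p) + (r + 1).choose 2 * rowCount p k := by
  rw [Fcount_eq_sum_rowCount, Fcount_eq_sum_rowCount, sum_range_add,
    sum_congr rfl fun j hj => rowCount_mul_add p k j hp ((mem_range.mp hj).trans hr), ← sum_mul,
    sum_range_succ_eq_choose_two]

/-- For a prime `p`, `k ≥ 0` and `0 ≤ r < p`:
`F_p(kp + r) − F_p(kp) = C(r+1,2) · (F_p(k+1) − F_p(k))`. -/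
theorem Fcount_diff (p : ℕ) (hp : p.Prime) (k r : ℕ) (hr : r < p) :
    (Fcount p (k * p + r) : ℤ) - (Fcount p (k * p) : ℤ) =
      (Nat.choose (r + 1) 2 : ℤ) * ((Fcount p (k + 1) : ℤ) - (Fcount p k : ℤ)) := by
  rw [Fcount_mul_add p k r hp hr, Fcount_succ]
  push_cast
  ring
end

section
/- Let p be an odd prime, and fix integers M ≥ 1 and 1 ≤ m < p^M. Then there exists a constant C > 0 such that for every integer k ≥ 0 and every t ∈ [0,1], |p^k · (G_p(θ_k(t)) − G_p(μ)) − μ^{−ρ_p−1} · Q_μ(t)| ≤ C · p^{−k}. -/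
open Finset

/-- `A_p = C(p+1,2) = p(p+1)/2`. -/
noncomputable def Ap (p : ℕ) : ℝ := p * (p + 1) / 2

/-- `ρ_p = log_p A_p`. -/
noncomputable def rhoP (p : ℕ) : ℝ := Real.log (Ap p) / Real.log p

/-- `bdig p x j` is the `j`-th base-`p` digit (`j ≥ 1`) of `x ∈ [0,1)`:
`⌊p^j x⌋ − p ⌊p^{j-1} x⌋`. -/
noncomputable def bdig (p : ℕ) (x : ℝ) (j : ℕ) : ℤ :=
  ⌊(p : ℝ) ^ j * x⌋ - p * ⌊(p : ℝ) ^ (j - 1) * x⌋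

/-- `φ_p(x) = (1/2) ∑_{j≥1} A_p^{-j} b_j(x) ∏_{i=1}^{j} (b_i(x)+1)` for `x ∈ [0,1)`,
with `φ_p(1) = 1`. -/
noncomputable def phiP (p : ℕ) (x : ℝ) : ℝ :=
  if x = 1 then 1 else
    (1 / 2) * ∑' j : ℕ,
      ((bdig p x (j + 1) : ℝ) * ∏ i ∈ Finset.range (j + 1), ((bdig p x (i + 1) : ℝ) + 1))
        / (Ap p) ^ (j + 1)

/-- `G_p(s) = s^{-ρ_p} φ_p(s)`. -/
noncomputable def Gp (p : ℕ) (s : ℝ) : ℝ := s ^ (-(rhoP p)) * phiP p s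

/-- `β_p = liminf_{n→∞} F_p(n) / n^{ρ_p}`. -/
noncomputable def betaP (p : ℕ) : ℝ :=
  Filter.atTop.liminf (fun n : ℕ => (Fcount p n : ℝ) / (n : ℝ) ^ (rhoP p))

/-- `adig p m M i` is the digit `a_i` (for `1 ≤ i ≤ M`) in the base-`p` expansion
`m = a_1 p^{M-1} + ⋯ + a_{M-1} p + a_M`. -/
def adig (p m M i : ℕ) : ℕ := m / p ^ (M - i) % p

/-- `τ_M = (∏_{i=1}^M (1 + a_i)) / A_p^M`. -/
noncomputable def tauM (p m M : ℕ) : ℝ :=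
  (∏ i ∈ Finset.Icc 1 M, ((adig p m M i : ℝ) + 1)) / (Ap p) ^ M

/-- `μ = (m + 1/2)/p^M`. -/
noncomputable def muP (p m M : ℕ) : ℝ := ((m : ℝ) + 1 / 2) / (p : ℝ) ^ M

/-- `θ_k(t) = m/p^M + ∑_{j=M+1}^{M+k} (p−1)/(2p^j) + t/p^{M+k}`. -/
noncomputable def thetaP (p m M k : ℕ) (t : ℝ) : ℝ :=
  (m : ℝ) / (p : ℝ) ^ M
    + ∑ j ∈ Finset.Icc (M + 1) (M + k), ((p : ℝ) - 1) / (2 * (p : ℝ) ^ j)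
    + t / (p : ℝ) ^ (M + k)

/-- `Q_μ(t) = τ_M μ (φ_p(t) − φ_p(1/2)) − ρ_p φ_p(μ) p^{−M} (t − 1/2)`. -/
noncomputable def Qmu (p m M : ℕ) (t : ℝ) : ℝ :=
  tauM p m M * muP p m M * (phiP p t - phiP p (1 / 2))
    - rhoP p * phiP p (muP p m M) / (p : ℝ) ^ M * (t - 1 / 2)

/-!
`φ_p` is self-similar: for `N < p^L` and `t ∈ [0,1]`, `φ_p((N + t)/p^L) = S + P/A_p^L · φ_p(t)`,
where `S` and `P` only depend on the `L` base-`p` digits of `N` (for `t < 1` this is a split of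
the digit series, for `t = 1` an induction over carries). Now `θ_k(t) = (n_k + t)/p^{M+k}`, where
`n_k` is `m` followed by `k` digits `(p-1)/2`, and `μ = θ_k(1/2)`. Each digit `(p-1)/2` multiplies
`P` by `(p+1)/2 = A_p/p`, so `p^k (φ_p(θ_k(t)) - φ_p(μ)) = τ_M (φ_p(t) - φ_p(1/2))` exactly.
Since `θ_k(t) - μ = (t - 1/2)/p^{M+k}`, what remains is the second-order Taylor error of
`s ↦ s^{-ρ_p}` at `μ`, which is `O(p^{-k})`.
-/

lemma abs_rpow_sub_rpow_le {a e x y : ℝ} (ha : 0 < a) (he : e ≤ 1) (hx : a ≤ x) (hy : a ≤ y) :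
    |x ^ e - y ^ e| ≤ |e| * a ^ (e - 1) * |x - y| := by
  have hderiv : ∀ z ∈ Set.Ici a, HasDerivWithinAt (fun w : ℝ => w ^ e) (e * z ^ (e - 1))
      (Set.Ici a) z := fun z hz =>
    (Real.hasDerivAt_rpow_const (Or.inl (ha.trans_le hz).ne')).hasDerivWithinAt
  have hbound : ∀ z ∈ Set.Ici a, ‖e * z ^ (e - 1)‖ ≤ |e| * a ^ (e - 1) := fun z hz => by
    rw [Real.norm_eq_abs, abs_mul, abs_of_nonneg (Real.rpow_nonneg (ha.le.trans hz) _)]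
    exact mul_le_mul_of_nonneg_left (Real.rpow_le_rpow_of_nonpos ha hz (by linarith))
      (abs_nonneg e)
  simpa only [Real.norm_eq_abs] using
    (convex_Ici a).norm_image_sub_le_of_norm_hasDerivWithin_le hderiv hbound hy hx

lemma abs_rpow_sub_rpow_sub_mul_le {a e x y : ℝ} (ha : 0 < a) (he : e ≤ 1) (hx : a ≤ x)
    (hy : a ≤ y) :
    |x ^ e - y ^ e - e * y ^ (e - 1) * (x - y)| ≤ |e| * |e - 1| * a ^ (e - 2) * (x - y) ^ 2 := by
  have hsub : Set.uIcc y x ⊆ Set.Ici a := fun z hz => le_trans (le_min hy hx) hz.1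
  have hderiv : ∀ z ∈ Set.uIcc y x, HasDerivWithinAt (fun w : ℝ => w ^ e - e * y ^ (e - 1) * w)
      (e * z ^ (e - 1) - e * y ^ (e - 1)) (Set.uIcc y x) z := fun z hz =>
    ((Real.hasDerivAt_rpow_const (Or.inl (ha.trans_le (hsub hz)).ne')).sub
      ((hasDerivAt_id z).const_mul _ |>.congr_deriv (mul_one _))).hasDerivWithinAt
  have hbound : ∀ z ∈ Set.uIcc y x,
      ‖e * z ^ (e - 1) - e * y ^ (e - 1)‖ ≤ |e| * |e - 1| * a ^ (e - 2) * |x - y| := by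
    intro z hz
    have hlip := abs_rpow_sub_rpow_le ha (by linarith : e - 1 ≤ 1) (hsub hz) hy
    rw [show e - 1 - 1 = e - 2 by ring] at hlip
    have hzy : |z - y| ≤ |x - y| := Set.abs_sub_left_of_mem_uIcc hz
    calc ‖e * z ^ (e - 1) - e * y ^ (e - 1)‖ = |e| * |z ^ (e - 1) - y ^ (e - 1)| := by
          rw [Real.norm_eq_abs, ← mul_sub, abs_mul]
      _ ≤ |e| * (|e - 1| * a ^ (e - 2) * |x - y|) := by gcongr; exact hlip.trans (by gcongr)
      _ = |e| * |e - 1| * a ^ (e - 2) * |x - y| := by ring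
  have h := (convex_uIcc y x).norm_image_sub_le_of_norm_hasDerivWithin_le hderiv hbound
    Set.left_mem_uIcc Set.right_mem_uIcc
  simp only [Real.norm_eq_abs] at h
  calc |x ^ e - y ^ e - e * y ^ (e - 1) * (x - y)|
      = |x ^ e - e * y ^ (e - 1) * x - (y ^ e - e * y ^ (e - 1) * y)| := by ring_nf
    _ ≤ |e| * |e - 1| * a ^ (e - 2) * |x - y| * |x - y| := h
    _ = |e| * |e - 1| * a ^ (e - 2) * (x - y) ^ 2 := by rw [mul_assoc, ← sq, sq_abs]

lemma abs_mul_rpow_neg_mul_sub_le {a ρ x y u v c lam : ℝ} (ha : 0 < a) (hρ : 0 ≤ ρ)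
    (hx : a ≤ x) (hy : a ≤ y) (hv : |v| ≤ 1) (hlam : 0 < lam) (hxy : |x - y| ≤ lam⁻¹)
    (huv : |lam * (u - v)| ≤ c) :
    |lam * (x ^ (-ρ) * u - y ^ (-ρ) * v)
        - y ^ (-ρ - 1) * (lam * (y * (u - v) - ρ * v * (x - y)))|
      ≤ (ρ * (ρ + 1) * a ^ (-ρ - 2) + c * (ρ * a ^ (-ρ - 1))) / lam := by
  have hc : 0 ≤ c := (abs_nonneg _).trans huv
  have hsplit : lam * (x ^ (-ρ) * u - y ^ (-ρ) * v)
        - y ^ (-ρ - 1) * (lam * (y * (u - v) - ρ * v * (x - y)))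
      = lam * v * (x ^ (-ρ) - y ^ (-ρ) - -ρ * y ^ (-ρ - 1) * (x - y))
        + lam * (u - v) * (x ^ (-ρ) - y ^ (-ρ)) := by
    have hy0 : y ≠ 0 := (ha.trans_le hy).ne'
    rw [Real.rpow_sub_one hy0]
    field_simp
    ring
  have hquad := abs_rpow_sub_rpow_sub_mul_le ha (e := -ρ) (by linarith) hx hy
  have hlin := abs_rpow_sub_rpow_le ha (e := -ρ) (by linarith) hx hy
  have habs : |-ρ - 1| = ρ + 1 := by rw [abs_of_nonpos (by linarith)]; ring
  rw [habs, abs_neg, abs_of_nonneg hρ] at hquad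
  rw [abs_neg, abs_of_nonneg hρ] at hlin
  have hsq : (x - y) ^ 2 ≤ lam⁻¹ ^ 2 := by
    rw [← sq_abs]
    exact pow_le_pow_left₀ (abs_nonneg _) hxy 2
  calc _ = |lam * v * (x ^ (-ρ) - y ^ (-ρ) - -ρ * y ^ (-ρ - 1) * (x - y))
          + lam * (u - v) * (x ^ (-ρ) - y ^ (-ρ))| := by rw [hsplit]
    _ ≤ lam * |v| * |x ^ (-ρ) - y ^ (-ρ) - -ρ * y ^ (-ρ - 1) * (x - y)|
          + |lam * (u - v)| * |x ^ (-ρ) - y ^ (-ρ)| := by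
        refine (abs_add_le _ _).trans (le_of_eq ?_)
        rw [abs_mul, abs_mul, abs_mul, abs_of_pos hlam]
    _ ≤ lam * 1 * (ρ * (ρ + 1) * a ^ (-ρ - 2) * lam⁻¹ ^ 2)
          + c * (ρ * a ^ (-ρ - 1) * lam⁻¹) := by
        gcongr
        · exact hquad.trans (by gcongr)
        · exact hlin.trans (by gcongr)
    _ = (ρ * (ρ + 1) * a ^ (-ρ - 2) + c * (ρ * a ^ (-ρ - 1))) / lam := by
        field_simp

lemma Ap_pos {p : ℕ} (hp : 0 < p) : 0 < Ap p := by
  unfold Ap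
  positivity

lemma one_lt_Ap {p : ℕ} (hp : 1 < p) : 1 < Ap p := by
  have : (2 : ℝ) ≤ p := by exact_mod_cast hp
  unfold Ap
  nlinarith

lemma rhoP_pos {p : ℕ} (hp : 1 < p) : 0 < rhoP p :=
  div_pos (Real.log_pos (one_lt_Ap hp)) (Real.log_pos (by exact_mod_cast hp))

lemma bdig_succ_eq_floor (p : ℕ) (x : ℝ) (j : ℕ) :
    bdig p x (j + 1) = ⌊(p : ℝ) * Int.fract ((p : ℝ) ^ j * x)⌋ := by
  have h : (p : ℝ) ^ (j + 1) * x
      = ((p * ⌊(p : ℝ) ^ j * x⌋ : ℤ) : ℝ) + p * Int.fract ((p : ℝ) ^ j * x) := by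
    push_cast
    rw [Int.fract, pow_succ]
    ring
  rw [bdig, Nat.add_sub_cancel, h, Int.floor_intCast_add]
  ring

lemma bdig_succ_mem_Icc {p : ℕ} (hp : 0 < p) (x : ℝ) (j : ℕ) :
    (bdig p x (j + 1) : ℝ) ∈ Set.Icc 0 ((p : ℝ) - 1) := by
  have hp' : (0 : ℝ) < p := by exact_mod_cast hp
  rw [bdig_succ_eq_floor]
  have hfr := Int.fract_lt_one ((p : ℝ) ^ j * x)
  have hlo : 0 ≤ ⌊(p : ℝ) * Int.fract ((p : ℝ) ^ j * x)⌋ :=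
    Int.floor_nonneg.mpr (mul_nonneg hp'.le (Int.fract_nonneg _))
  have hhi : ⌊(p : ℝ) * Int.fract ((p : ℝ) ^ j * x)⌋ < p :=
    Int.floor_lt.mpr (by push_cast; nlinarith)
  constructor
  · exact_mod_cast hlo
  · have : ⌊(p : ℝ) * Int.fract ((p : ℝ) ^ j * x)⌋ ≤ (p : ℤ) - 1 := by omega
    exact_mod_cast this

noncomputable section

-- `d i` is the `i`-th digit, counted from `i = 1` as in `bdig` and `adig`; `d 0` is never read.
def digitProd (d : ℕ → ℝ) (n : ℕ) : ℝ := ∏ i ∈ range n, (d (i + 1) + 1)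

def digitTerm (p : ℕ) (d : ℕ → ℝ) (j : ℕ) : ℝ := d (j + 1) * digitProd d (j + 1) / Ap p ^ (j + 1)

def fixedDigits (p L N : ℕ) (i : ℕ) : ℝ := adig p N L i

def partialPhi (p L N : ℕ) : ℝ := 1 / 2 * ∑ j ∈ range L, digitTerm p (fixedDigits p L N) j

end

lemma phiP_eq_tsum (p : ℕ) {x : ℝ} (hx : x ≠ 1) :
    phiP p x = 1 / 2 * ∑' j, digitTerm p (fun i => (bdig p x i : ℝ)) j := by
  rw [phiP, if_neg hx]
  rfl

lemma digitProd_congr {d d' : ℕ → ℝ} {n : ℕ} (h : ∀ i ∈ Icc 1 n, d i = d' i) :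
    digitProd d n = digitProd d' n :=
  prod_congr rfl fun i hi => by rw [h (i + 1) (by simp at hi ⊢; omega)]

lemma digitTerm_congr {p : ℕ} {d d' : ℕ → ℝ} {j : ℕ} (h : ∀ i ∈ Icc 1 (j + 1), d i = d' i) :
    digitTerm p d j = digitTerm p d' j := by
  rw [digitTerm, digitTerm, digitProd_congr h, h (j + 1) (by simp)]

lemma digitTerm_add (p : ℕ) (d : ℕ → ℝ) (L j : ℕ) :
    digitTerm p d (j + L) = digitProd d L / Ap p ^ L * digitTerm p (fun i => d (L + i)) j := by
  rw [digitTerm, digitTerm, digitProd, digitProd, digitProd,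
    show j + L + 1 = L + (j + 1) by omega, prod_range_add, pow_add]
  simp only [add_assoc]
  ring

lemma hasSum_digitTerm_majorant {p : ℕ} (hp : 1 < p) :
    HasSum (fun j : ℕ => ((p : ℝ) - 1) * ((p : ℝ) / Ap p) ^ (j + 1)) 2 := by
  have hp' : (1 : ℝ) < p := by exact_mod_cast hp
  have hA := Ap_pos (zero_lt_one.trans hp)
  have hr1 : (p : ℝ) / Ap p < 1 := (div_lt_one hA).mpr (by unfold Ap; nlinarith)
  have h := (hasSum_geometric_of_lt_one (by positivity) hr1).mul_left (((p : ℝ) - 1) * (p / Ap p))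
  have hsum : ((p : ℝ) - 1) * (p / Ap p) * (1 - p / Ap p)⁻¹ = 2 := by
    rw [mul_inv_eq_iff_eq_mul₀ (by linarith)]
    unfold Ap
    field_simp
    ring
  rw [hsum] at h
  exact h.congr_fun fun j => by ring

section DigitSequence

variable {p : ℕ} {d : ℕ → ℝ}

lemma digitTerm_nonneg (hd : ∀ i, 0 ≤ d (i + 1)) (j : ℕ) : 0 ≤ digitTerm p d j := by
  have hprod : 0 ≤ digitProd d (j + 1) := prod_nonneg fun i _ => by linarith [hd i]
  have hA : 0 ≤ Ap p := by unfold Ap; positivity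
  exact div_nonneg (mul_nonneg (hd j) hprod) (pow_nonneg hA _)

lemma digitTerm_le (hp : 0 < p) (hd : ∀ i, d (i + 1) ∈ Set.Icc 0 ((p : ℝ) - 1)) (j : ℕ) :
    digitTerm p d j ≤ ((p : ℝ) - 1) * ((p : ℝ) / Ap p) ^ (j + 1) := by
  have hprod : digitProd d (j + 1) ≤ (p : ℝ) ^ (j + 1) := by
    refine (prod_le_prod (fun i _ => ?_) fun i _ => ?_).trans_eq (by rw [prod_const, card_range])
    · linarith [(hd i).1]
    · linarith [(hd i).2]
  have hprod0 : 0 ≤ digitProd d (j + 1) := prod_nonneg fun i _ => by linarith [(hd i).1]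
  rw [digitTerm, div_pow, ← mul_div_assoc]
  gcongr
  · exact pow_nonneg (Ap_pos hp).le _
  · linarith [(hd j).1, (hd j).2]
  · exact (hd j).2

lemma summable_digitTerm (hp : 1 < p) (hd : ∀ i, d (i + 1) ∈ Set.Icc 0 ((p : ℝ) - 1)) :
    Summable (digitTerm p d) :=
  (hasSum_digitTerm_majorant hp).summable.of_nonneg_of_le (digitTerm_nonneg fun i => (hd i).1)
    (digitTerm_le (zero_lt_one.trans hp) hd)

lemma tsum_digitTerm_le_two (hp : 1 < p) (hd : ∀ i, d (i + 1) ∈ Set.Icc 0 ((p : ℝ) - 1)) :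
    ∑' j, digitTerm p d j ≤ 2 :=
  hasSum_le (digitTerm_le (zero_lt_one.trans hp) hd) (summable_digitTerm hp hd).hasSum
    (hasSum_digitTerm_majorant hp)

end DigitSequence

lemma phiP_nonneg {p : ℕ} (hp : 0 < p) (x : ℝ) : 0 ≤ phiP p x := by
  by_cases hx : x = 1
  · simp [phiP, hx]
  · rw [phiP_eq_tsum p hx]
    have : 0 ≤ ∑' j, digitTerm p (fun i => (bdig p x i : ℝ)) j :=
      tsum_nonneg (digitTerm_nonneg fun i => (bdig_succ_mem_Icc hp x i).1)
    positivity

lemma phiP_le_one {p : ℕ} (hp : 1 < p) (x : ℝ) : phiP p x ≤ 1 := by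
  by_cases hx : x = 1
  · simp [phiP, hx]
  · rw [phiP_eq_tsum p hx]
    linarith [tsum_digitTerm_le_two (d := fun i => (bdig p x i : ℝ)) hp
      (bdig_succ_mem_Icc (zero_lt_one.trans hp) x)]

lemma abs_phiP_le_one {p : ℕ} (hp : 1 < p) (x : ℝ) : |phiP p x| ≤ 1 :=
  abs_le.mpr ⟨by linarith [phiP_nonneg (zero_lt_one.trans hp) x], phiP_le_one hp x⟩

lemma abs_phiP_sub_phiP_le_one {p : ℕ} (hp : 1 < p) (x y : ℝ) : |phiP p x - phiP p y| ≤ 1 :=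
  abs_sub_le_iff.mpr ⟨by linarith [phiP_nonneg (zero_lt_one.trans hp) y, phiP_le_one hp x],
    by linarith [phiP_nonneg (zero_lt_one.trans hp) x, phiP_le_one hp y]⟩

lemma phiP_zero (p : ℕ) : phiP p 0 = 0 := by
  simp [phiP_eq_tsum p zero_ne_one, digitTerm, bdig]

lemma floor_pow_mul_natCast_add_div_pow {p : ℕ} (hp : 0 < p) {L N j : ℕ} {t : ℝ} (ht0 : 0 ≤ t)
    (ht1 : t < 1) (hj : j ≤ L) :
    ⌊(p : ℝ) ^ j * ((N + t) / (p : ℝ) ^ L)⌋ = ((N / p ^ (L - j) : ℕ) : ℤ) := by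
  have h : (p : ℝ) ^ j * ((N + t) / (p : ℝ) ^ L) = (N + t) / ((p ^ (L - j) : ℕ) : ℝ) := by
    rw [Nat.cast_pow, ← mul_div_assoc, div_eq_div_iff (by positivity) (by positivity),
      show (p : ℝ) ^ L = p ^ j * p ^ (L - j) by rw [← pow_add, Nat.add_sub_cancel' hj]]
    ring
  rw [h, Int.floor_div_natCast, Int.floor_natCast_add, Int.floor_eq_zero_iff.mpr ⟨ht0, ht1⟩,
    add_zero]
  norm_cast

lemma floor_pow_add_mul_natCast_add_div_pow {p : ℕ} (hp : 0 < p) (L N j : ℕ) (t : ℝ) :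
    ⌊(p : ℝ) ^ (L + j) * ((N + t) / (p : ℝ) ^ L)⌋ = N * p ^ j + ⌊(p : ℝ) ^ j * t⌋ := by
  have h : (p : ℝ) ^ (L + j) * ((N + t) / (p : ℝ) ^ L)
      = ((N * p ^ j : ℤ) : ℝ) + (p : ℝ) ^ j * t := by
    have : (p : ℝ) ^ L ≠ 0 := by positivity
    push_cast
    field_simp
    ring
  rw [h, Int.floor_intCast_add]

lemma bdig_natCast_add_div_pow {p : ℕ} (hp : 0 < p) {L N j : ℕ} {t : ℝ} (ht0 : 0 ≤ t)
    (ht1 : t < 1) (hj : j ∈ Icc 1 L) :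
    bdig p ((N + t) / (p : ℝ) ^ L) j = adig p N L j := by
  obtain ⟨hj1, hjL⟩ := mem_Icc.mp hj
  have hdiv : N / p ^ (L - (j - 1)) = N / p ^ (L - j) / p := by
    rw [Nat.div_div_eq_div_mul, ← pow_succ]
    congr 2
    omega
  rw [bdig, floor_pow_mul_natCast_add_div_pow hp ht0 ht1 hjL,
    floor_pow_mul_natCast_add_div_pow hp ht0 ht1 (by omega), hdiv, adig]
  have := Nat.mod_add_div (N / p ^ (L - j)) p
  omega

lemma bdig_natCast_add_div_pow_add {p : ℕ} (hp : 0 < p) (L N : ℕ) (t : ℝ) {j : ℕ} (hj : 1 ≤ j) :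
    bdig p ((N + t) / (p : ℝ) ^ L) (L + j) = bdig p t j := by
  obtain ⟨i, rfl⟩ := Nat.exists_eq_add_of_le' hj
  rw [bdig, bdig, show L + (i + 1) - 1 = L + i by omega, Nat.add_sub_cancel,
    floor_pow_add_mul_natCast_add_div_pow hp, floor_pow_add_mul_natCast_add_div_pow hp, pow_succ]
  ring

lemma phiP_natCast_add_div_pow_of_lt_one {p : ℕ} (hp : 1 < p) {L N : ℕ} (hN : N < p ^ L)
    {t : ℝ} (ht0 : 0 ≤ t) (ht1 : t < 1) :
    phiP p ((N + t) / (p : ℝ) ^ L)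
      = partialPhi p L N + digitProd (fixedDigits p L N) L / Ap p ^ L * phiP p t := by
  have hp0 : 0 < p := zero_lt_one.trans hp
  set x := (N + t) / (p : ℝ) ^ L
  have hx : x < 1 := by
    have : (N : ℝ) + 1 ≤ (p : ℝ) ^ L := by exact_mod_cast hN
    rw [div_lt_one (by positivity)]
    linarith
  have hlow : ∀ j ∈ range L,
      digitTerm p (fun i => (bdig p x i : ℝ)) j = digitTerm p (fixedDigits p L N) j :=
    fun j hj => digitTerm_congr fun i hi => by
      rw [fixedDigits, bdig_natCast_add_div_pow hp0 ht0 ht1 (by simp at hi hj ⊢; omega)]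
      rfl
  have hhigh : ∀ j, digitTerm p (fun i => (bdig p x i : ℝ)) (j + L)
      = digitProd (fixedDigits p L N) L / Ap p ^ L
        * digitTerm p (fun i => (bdig p t i : ℝ)) j := by
    intro j
    rw [digitTerm_add, digitTerm_congr fun i hi => by
      rw [bdig_natCast_add_div_pow_add hp0 L N t (mem_Icc.mp hi).1]]
    congr 2
    exact digitProd_congr fun i hi => by
      rw [fixedDigits, bdig_natCast_add_div_pow hp0 ht0 ht1 hi]
      rfl
  rw [phiP_eq_tsum p hx.ne, phiP_eq_tsum p ht1.ne,
    ← (summable_digitTerm hp (bdig_succ_mem_Icc hp0 x)).sum_add_tsum_nat_add L,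
    sum_congr rfl hlow, tsum_congr hhigh, tsum_mul_left, partialPhi]
  ring

section Snoc

variable {p L N r : ℕ}

lemma adig_mul_add (hp : 0 < p) (hr : r < p) {j : ℕ} (hj : j ≤ L) :
    adig p (N * p + r) (L + 1) j = adig p N L j := by
  rw [adig, adig, show L + 1 - j = L - j + 1 by omega, pow_succ', ← Nat.div_div_eq_div_mul,
    mul_comm N, Nat.mul_add_div hp, Nat.div_eq_of_lt hr, add_zero]

lemma adig_mul_add_self (hr : r < p) : adig p (N * p + r) (L + 1) (L + 1) = r := by
  simp [adig, Nat.mod_eq_of_lt hr]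

lemma digitProd_fixedDigits_mul_add (hp : 0 < p) (hr : r < p) :
    digitProd (fixedDigits p (L + 1) (N * p + r)) (L + 1)
      = digitProd (fixedDigits p L N) L * (r + 1) := by
  rw [digitProd, prod_range_succ, fixedDigits, adig_mul_add_self hr]
  congr 1
  exact prod_congr rfl fun i hi => by
    rw [fixedDigits, fixedDigits, adig_mul_add hp hr (by simp at hi; omega)]

lemma partialPhi_mul_add (hp : 0 < p) (hr : r < p) :
    partialPhi p (L + 1) (N * p + r)
      = partialPhi p L N
        + r * (digitProd (fixedDigits p L N) L * (r + 1)) / (2 * Ap p ^ (L + 1)) := by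
  have hlow : ∀ j ∈ range L, digitTerm p (fixedDigits p (L + 1) (N * p + r)) j
      = digitTerm p (fixedDigits p L N) j := fun j hj => digitTerm_congr fun i hi => by
    rw [fixedDigits, fixedDigits, adig_mul_add hp hr (by simp at hi hj; omega)]
  rw [partialPhi, partialPhi, sum_range_succ, sum_congr rfl hlow, digitTerm,
    digitProd_fixedDigits_mul_add hp hr, fixedDigits, adig_mul_add_self hr]
  ring

end Snoc

lemma phiP_natCast_add_one_div_pow {p : ℕ} (hp : 1 < p) {L N : ℕ} (hN : N < p ^ L) :
    phiP p ((N + 1) / (p : ℝ) ^ L)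
      = partialPhi p L N + digitProd (fixedDigits p L N) L / Ap p ^ L := by
  have hp0 : 0 < p := zero_lt_one.trans hp
  induction L generalizing N with
  | zero =>
    obtain rfl : N = 0 := by simpa using hN
    simp [phiP, partialPhi, digitProd]
  | succ L ih =>
    obtain ⟨q, r, hr, rfl⟩ : ∃ q r, r < p ∧ N = q * p + r :=
      ⟨N / p, N % p, Nat.mod_lt _ hp0, (Nat.div_add_mod' N p).symm⟩
    have hq : q < p ^ L := by
      rw [pow_succ] at hN
      by_contra! h
      nlinarith [Nat.mul_le_mul_right p h]
    have hA : Ap p ≠ 0 := (Ap_pos hp0).ne'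
    rw [partialPhi_mul_add hp0 hr, digitProd_fixedDigits_mul_add hp0 hr]
    rcases Nat.lt_or_ge (r + 1) p with hr1 | hr1
    · -- no carry: the next number only changes its last digit
      have hlt : q * p + (r + 1) < p ^ (L + 1) := by
        rw [pow_succ]
        nlinarith
      rw [show ((q * p + r : ℕ) : ℝ) + 1 = ((q * p + (r + 1) : ℕ) : ℝ) + 0 by push_cast; ring,
        phiP_natCast_add_div_pow_of_lt_one hp hlt le_rfl zero_lt_one, phiP_zero,
        partialPhi_mul_add hp0 hr1]
      push_cast
      field_simp
      ring
    · -- carry: `(q p + p) / p ^ (L + 1) = (q + 1) / p ^ L`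
      have hrp : (r : ℝ) = p - 1 := by
        rw [show r = p - 1 by omega, Nat.cast_pred hp0]
      have hx : ((q * p + r : ℕ) : ℝ) + 1 = (q + 1) * p := by
        push_cast
        rw [hrp]
        ring
      rw [hx, pow_succ, mul_div_mul_right _ _ (by positivity), ih hq, hrp]
      field_simp
      unfold Ap
      ring

lemma phiP_natCast_add_div_pow {p : ℕ} (hp : 1 < p) {L N : ℕ} (hN : N < p ^ L) {t : ℝ}
    (ht : t ∈ Set.Icc 0 1) :
    phiP p ((N + t) / (p : ℝ) ^ L)
      = partialPhi p L N + digitProd (fixedDigits p L N) L / Ap p ^ L * phiP p t := by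
  rcases ht.2.lt_or_eq with ht1 | rfl
  · exact phiP_natCast_add_div_pow_of_lt_one hp hN ht.1 ht1
  · rw [phiP_natCast_add_one_div_pow hp hN, show phiP p 1 = 1 from if_pos rfl, mul_one]

def thetaNum (p m : ℕ) : ℕ → ℕ
  | 0 => m
  | k + 1 => thetaNum p m k * p + (p - 1) / 2

section Theta

variable {p m M : ℕ}

lemma thetaNum_lt (hp : 0 < p) (hm : m < p ^ M) (k : ℕ) : thetaNum p m k < p ^ (M + k) := by
  induction k with
  | zero => exact hm
  | succ k ih =>
    rw [thetaNum, ← add_assoc, pow_succ]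
    have : (p - 1) / 2 < p := by omega
    nlinarith

lemma cast_pred_div_two (hodd : Odd p) : (((p - 1) / 2 : ℕ) : ℝ) = ((p : ℝ) - 1) / 2 := by
  obtain ⟨l, rfl⟩ := hodd
  rw [show (2 * l + 1 - 1) / 2 = l by omega]
  push_cast
  ring

lemma thetaP_succ (hp : 0 < p) (k : ℕ) (t : ℝ) :
    thetaP p m M (k + 1) t = thetaP p m M k ((((p : ℝ) - 1) / 2 + t) / p) := by
  rw [thetaP, thetaP, ← add_assoc, sum_Icc_succ_top (by omega), pow_succ]
  field_simp
  ring

lemma thetaP_eq_div (hodd : Odd p) (k : ℕ) (t : ℝ) :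
    thetaP p m M k t = (thetaNum p m k + t) / (p : ℝ) ^ (M + k) := by
  have hp : 0 < p := hodd.pos
  induction k generalizing t with
  | zero =>
    simp only [thetaP, thetaNum, add_zero, Icc_eq_empty_of_lt (Nat.lt_succ_self M), sum_empty]
    ring
  | succ k ih =>
    rw [thetaP_succ hp, ih, thetaNum, ← add_assoc, pow_succ]
    push_cast
    rw [cast_pred_div_two hodd]
    field_simp
    ring

lemma thetaP_half (hp : 0 < p) (k : ℕ) : thetaP p m M k (1 / 2) = muP p m M := by
  induction k with
  | zero => simp [thetaP, muP, add_div]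
  | succ k ih =>
    have : (p : ℝ) ≠ 0 := by positivity
    rw [thetaP_succ hp, ← ih]
    congr 1
    field_simp
    ring

lemma digitProd_fixedDigits_thetaNum (hodd : Odd p) (k : ℕ) :
    digitProd (fixedDigits p (M + k) (thetaNum p m k)) (M + k)
      = digitProd (fixedDigits p M m) M * (((p : ℝ) + 1) / 2) ^ k := by
  induction k with
  | zero => simp [thetaNum]
  | succ k ih =>
    rw [thetaNum, ← add_assoc,
      digitProd_fixedDigits_mul_add hodd.pos (by have := hodd.pos; omega), ih,
      cast_pred_div_two hodd, pow_succ]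
    ring

lemma tauM_eq_digitProd : tauM p m M = digitProd (fixedDigits p M m) M / Ap p ^ M := by
  rw [tauM, digitProd, range_eq_Ico, prod_Ico_add' (fun i => fixedDigits p M m i + 1), zero_add,
    Ico_add_one_right_eq_Icc]
  rfl

lemma tauM_nonneg : 0 ≤ tauM p m M := by
  unfold tauM Ap
  positivity

lemma div_pow_le_thetaP (hp : 0 < p) (k : ℕ) {t : ℝ} (ht : 0 ≤ t) :
    (m : ℝ) / p ^ M ≤ thetaP p m M k t := by
  have hsum : 0 ≤ ∑ j ∈ Icc (M + 1) (M + k), ((p : ℝ) - 1) / (2 * (p : ℝ) ^ j) :=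
    sum_nonneg fun j _ => div_nonneg (sub_nonneg.mpr (by exact_mod_cast hp)) (by positivity)
  have : 0 ≤ t / (p : ℝ) ^ (M + k) := by positivity
  rw [thetaP]
  linarith

lemma phiP_thetaP (hodd : Odd p) (hp : 1 < p) (hm : m < p ^ M) (k : ℕ) {t : ℝ}
    (ht : t ∈ Set.Icc 0 1) :
    phiP p (thetaP p m M k t)
      = partialPhi p (M + k) (thetaNum p m k) + tauM p m M / p ^ k * phiP p t := by
  have hA : Ap p ^ k = (p : ℝ) ^ k * (((p : ℝ) + 1) / 2) ^ k := by
    rw [← mul_pow]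
    unfold Ap
    ring
  rw [thetaP_eq_div hodd, phiP_natCast_add_div_pow hp (thetaNum_lt hodd.pos hm k) ht,
    digitProd_fixedDigits_thetaNum hodd, tauM_eq_digitProd, pow_add, hA]
  field_simp

lemma pow_mul_phiP_thetaP_sub_phiP_muP (hodd : Odd p) (hp : 1 < p) (hm : m < p ^ M) (k : ℕ)
    {t : ℝ} (ht : t ∈ Set.Icc 0 1) :
    (p : ℝ) ^ k * (phiP p (thetaP p m M k t) - phiP p (muP p m M))
      = tauM p m M * (phiP p t - phiP p (1 / 2)) := by
  rw [← thetaP_half hodd.pos k, phiP_thetaP hodd hp hm k ht,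
    phiP_thetaP hodd hp hm k ⟨by norm_num, by norm_num⟩]
  field_simp
  ring

lemma pow_mul_thetaP_sub_muP (hodd : Odd p) (k : ℕ) (t : ℝ) :
    (p : ℝ) ^ k * (thetaP p m M k t - muP p m M) = (t - 1 / 2) / p ^ M := by
  have : (p : ℝ) ≠ 0 := by exact_mod_cast hodd.pos.ne'
  rw [← thetaP_half hodd.pos k, thetaP_eq_div hodd, thetaP_eq_div hodd, pow_add]
  field_simp
  ring

lemma abs_thetaP_sub_muP_le (hodd : Odd p) (k : ℕ) {t : ℝ} (ht : t ∈ Set.Icc 0 1) :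
    |thetaP p m M k t - muP p m M| ≤ ((p : ℝ) ^ k)⁻¹ := by
  have hpk : (0 : ℝ) < p ^ k := by have := hodd.pos; positivity
  have hpM : (1 : ℝ) ≤ p ^ M := one_le_pow₀ (by exact_mod_cast hodd.pos)
  have h : |(t - 1 / 2) / p ^ M| ≤ 1 := by
    have hpM0 : (0 : ℝ) < p ^ M := zero_lt_one.trans_le hpM
    rw [abs_div, abs_of_pos hpM0, div_le_one hpM0]
    exact (abs_le.mpr ⟨by linarith [ht.1], by linarith [ht.2]⟩).trans hpM
  rw [← pow_mul_thetaP_sub_muP hodd, abs_mul, abs_of_pos hpk] at h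
  rw [← one_div, le_div_iff₀ hpk]
  linarith

lemma Qmu_eq (hodd : Odd p) (hp : 1 < p) (hm : m < p ^ M) (k : ℕ) {t : ℝ}
    (ht : t ∈ Set.Icc 0 1) :
    Qmu p m M t = p ^ k * (muP p m M * (phiP p (thetaP p m M k t) - phiP p (muP p m M))
      - rhoP p * phiP p (muP p m M) * (thetaP p m M k t - muP p m M)) := by
  rw [Qmu]
  linear_combination (-muP p m M) * pow_mul_phiP_thetaP_sub_phiP_muP hodd hp hm k ht
    + rhoP p * phiP p (muP p m M) * pow_mul_thetaP_sub_muP (m := m) (M := M) hodd k t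

end Theta

theorem magnifying_G_general (p : ℕ) (hodd : Odd p) (M m : ℕ)
    (hm1 : 1 ≤ m) (hm2 : m < p ^ M) :
    ∃ C : ℝ, 0 < C ∧ ∀ k : ℕ, ∀ t ∈ Set.Icc (0 : ℝ) 1,
      |(p : ℝ) ^ k * (Gp p (thetaP p m M k t) - Gp p (muP p m M))
          - muP p m M ^ (-(rhoP p) - 1) * Qmu p m M t| ≤ C / (p : ℝ) ^ k := by
  have hp : 1 < p := by
    rcases Nat.lt_or_eq_of_le hodd.pos with h | rfl
    · exact h
    · simp at hm2
      omega
  have hρ := rhoP_pos hp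
  have ha : (0 : ℝ) < m / p ^ M :=
    div_pos (by exact_mod_cast hm1) (pow_pos (by exact_mod_cast hodd.pos) M)
  refine ⟨rhoP p * (rhoP p + 1) * ((m : ℝ) / p ^ M) ^ (-rhoP p - 2)
      + tauM p m M * (rhoP p * ((m : ℝ) / p ^ M) ^ (-rhoP p - 1)), ?_, fun k t ht => ?_⟩
  · have := tauM_nonneg (p := p) (m := m) (M := M)
    positivity
  rw [Qmu_eq hodd hp hm2 k ht]
  refine abs_mul_rpow_neg_mul_sub_le ha hρ.le (div_pow_le_thetaP hodd.pos k ht.1)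
    (thetaP_half hodd.pos k ▸ div_pow_le_thetaP hodd.pos k (by norm_num)) (abs_phiP_le_one hp _)
    (by positivity) (abs_thetaP_sub_muP_le hodd k ht) ?_
  rw [pow_mul_phiP_thetaP_sub_phiP_muP hodd hp hm2 k ht, abs_mul, abs_of_nonneg tauM_nonneg]
  exact mul_le_of_le_one_right tauM_nonneg (abs_phiP_sub_phiP_le_one hp _ _)

/-- For an odd prime `p`, `M ≥ 1`, `1 ≤ m < p^M`, there is `C > 0` such that for all
`k ≥ 0` and `t ∈ [0,1]`:
`|p^k (G_p(θ_k(t)) − G_p(μ)) − μ^{−ρ_p−1} Q_μ(t)| ≤ C p^{−k}`. -/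
theorem magnifying_G (p : ℕ) (hp : p.Prime) (hodd : Odd p) (M m : ℕ)
    (hM : 1 ≤ M) (hm1 : 1 ≤ m) (hm2 : m < p ^ M) :
    ∃ C : ℝ, 0 < C ∧ ∀ k : ℕ, ∀ t ∈ Set.Icc (0 : ℝ) 1,
      |(p : ℝ) ^ k * (Gp p (thetaP p m M k t) - Gp p (muP p m M))
          - muP p m M ^ (-(rhoP p) - 1) * Qmu p m M t| ≤ C / (p : ℝ) ^ k :=
  magnifying_G_general p hodd M m hm1 hm2
end

section
/- Let p ≥ 2 be an integer, γ_0, …, γ_{p−1} > 0 real numbers, A := ∑_{j=0}^{p−1} γ_j, ρ := log_p A, and let f : ℕ_{≥1} → ℝ satisfy the recurrence f(n) = ∑_{j=0}^{p−1} γ_j · f(⌊(n+j)/p⌋) for all n ≥ p. Let P(t) := A^{−{t}} · f(p^{{t}}) where f is extended to real x ≥ 1 by f(n+t) := (1−φ(t))·f(n) + φ(t)·f(n+1) (n ≥ 1 integer, t ∈ [0,1], φ the unique continuous strictly increasing function with φ(0)=0, φ(1)=1 satisfying φ(t) = (γ_{p−j−1}/A)·φ(pt−j) + (∑_{p−j≤i<p}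 γ_i)/A on [j/p,(j+1)/p]). Then sup_{n≥1} f(n)/n^ρ = limsup_{n→∞} f(n)/n^ρ = max_{t∈[0,1]} P(t) and inf_{n≥1} f(n)/n^ρ = liminf_{n→∞} f(n)/n^ρ = min_{t∈[0,1]} P(t). -/
/-!
The recurrence and the self-similarity of `φ` combine into `fext (p x) = A · fext x` for `x ≥ 1`.
Hence `h x = fext x / x ^ ρ` is continuous on `[1, ∞)` and invariant under `x ↦ p x`, and
`P t = h (p ^ t)` on `[0, 1]`. Every value `f n / n ^ ρ = h n` is therefore a value of `P` on
`[0, 1]`, and conversely every value `h x` is the limit of `h ⌈p ^ k x⌉ = h (⌈p ^ k x⌉ / p ^ k)`.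
So the extreme values of `P` bound the sequence and are cluster values of it, which forces
`sup = limsup = max P` and `inf = liminf = min P`.
-/

open Filter Set Topology

section ClusterPoint
variable {α : Type*} [ConditionallyCompleteLinearOrder α] [TopologicalSpace α] [OrderTopology α]
  {a : ℕ → α} {M : α}

theorem sSup_eq_limsup_of_mapClusterPt (hle : ∀ n, 1 ≤ n → a n ≤ M)
    (hM : MapClusterPt M atTop a) :
    sSup {y | ∃ n, 1 ≤ n ∧ y = a n} = limsup a atTop ∧ limsup a atTop = M := by
  have hbdd : IsBoundedUnder (· ≤ ·) atTop a :=
    isBoundedUnder_of_eventually_le (eventually_atTop.2 ⟨1, hle⟩)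
  have hcobdd : IsCoboundedUnder (· ≤ ·) atTop a :=
    ⟨M, fun b hb => isClosed_Iic.mem_of_mapClusterPt hM hb⟩
  have hlimsup : limsup a atTop = M :=
    le_antisymm (limsup_le_of_le hcobdd (eventually_atTop.2 ⟨1, hle⟩)) (hM.le_limsup hbdd)
  refine ⟨?_, hlimsup⟩
  rw [hlimsup]
  refine csSup_eq_of_forall_le_of_forall_lt_exists_gt ⟨a 1, 1, le_rfl, rfl⟩
    (by rintro _ ⟨n, hn, rfl⟩; exact hle n hn) fun w hw => ?_
  obtain ⟨n, hwn, hn⟩ := ((hM.frequently (Ioi_mem_nhds hw)).and_eventually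
    (eventually_ge_atTop 1)).exists
  exact ⟨a n, ⟨n, hn, rfl⟩, hwn⟩

theorem sInf_eq_liminf_of_mapClusterPt (hle : ∀ n, 1 ≤ n → M ≤ a n)
    (hM : MapClusterPt M atTop a) :
    sInf {y | ∃ n, 1 ≤ n ∧ y = a n} = liminf a atTop ∧ liminf a atTop = M :=
  sSup_eq_limsup_of_mapClusterPt (α := αᵒᵈ) hle hM

end ClusterPoint

section MulPeriodic
variable {h : ℝ → ℝ} {c : ℝ}

theorem apply_pow_mul_of_mulPeriodic (hh : ∀ x, 1 ≤ x → h (c * x) = h x) (hc : 1 ≤ c) (k : ℕ)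
    {x : ℝ} (hx : 1 ≤ x) : h (c ^ k * x) = h x := by
  induction k with
  | zero => simp
  | succ k ih =>
    rw [pow_succ', mul_assoc, hh _ (one_le_mul_of_one_le_of_one_le (one_le_pow₀ hc) hx), ih]

theorem apply_rpow_fract_of_mulPeriodic (hh : ∀ x, 1 ≤ x → h (c * x) = h x) (hc : 1 < c)
    {t : ℝ} (ht : 0 ≤ t) : h (c ^ Int.fract t) = h (c ^ t) := by
  have hsplit : t = ⌊t⌋₊ + Int.fract t := by
    rw [Int.fract, ← Int.natCast_floor_eq_floor ht]
    push_cast; ring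
  conv_rhs => rw [hsplit, Real.rpow_add (by linarith), Real.rpow_natCast]
  exact (apply_pow_mul_of_mulPeriodic hh hc.le _
    (Real.one_le_rpow hc.le (Int.fract_nonneg t))).symm

theorem mapClusterPt_of_mulPeriodic (hh : ∀ x, 1 ≤ x → h (c * x) = h x) (hc : 1 < c)
    (hcont : ContinuousOn h (Ici 1)) {a : ℕ → ℝ} (ha : ∀ n, 1 ≤ n → a n = h n)
    {x : ℝ} (hx : 1 ≤ x) : MapClusterPt (h x) atTop a := by
  have hc0 : 0 < c := by linarith
  set n : ℕ → ℕ := fun k => ⌈c ^ k * x⌉₊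
  set y : ℕ → ℝ := fun k => n k / c ^ k
  have hxy : ∀ k, x ≤ y k := fun k => by
    rw [le_div_iff₀ (by positivity), mul_comm]; exact Nat.le_ceil _
  have hyx : ∀ k, y k ≤ x + (c⁻¹) ^ k := fun k => by
    rw [div_le_iff₀ (by positivity), add_mul, inv_pow, inv_mul_cancel₀ (by positivity), mul_comm]
    exact (Nat.ceil_lt_add_one (by positivity)).le
  have hy : Tendsto y atTop (𝓝 x) := by
    refine tendsto_of_tendsto_of_tendsto_of_le_of_le tendsto_const_nhds ?_ hxy hyx
    simpa using (tendsto_pow_atTop_nhds_zero_of_lt_one (by positivity)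
      (inv_lt_one_of_one_lt₀ hc)).const_add x
  have hn : Tendsto n atTop atTop := tendsto_nat_ceil_atTop.comp
    ((tendsto_pow_atTop_atTop_of_one_lt hc).atTop_mul_const (by linarith))
  refine MapClusterPt.of_comp hn (Tendsto.mapClusterPt ?_)
  have hyh : Tendsto (fun k => h (y k)) atTop (𝓝 (h x)) := (hcont x hx).tendsto.comp
    (tendsto_nhdsWithin_iff.2 ⟨hy, Eventually.of_forall fun k => hx.trans (hxy k)⟩)
  refine hyh.congr fun k => ?_
  have hnk : 1 ≤ n k := Nat.one_le_cast.1
    ((one_le_mul_of_one_le_of_one_le (one_le_pow₀ hc.le) hx).trans (Nat.le_ceil _))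
  rw [Function.comp_apply, ha _ hnk, ← apply_pow_mul_of_mulPeriodic hh hc.le k (hx.trans (hxy k)),
    mul_div_cancel₀ _ (by positivity)]

theorem exists_mem_Icc_apply_eq_rpow_of_mulPeriodic (hh : ∀ x, 1 ≤ x → h (c * x) = h x)
    (hc : 1 < c) {y : ℝ} (hy : 1 ≤ y) : ∃ t ∈ Icc (0 : ℝ) 1, h y = h (c ^ t) :=
  ⟨Int.fract (Real.logb c y), ⟨Int.fract_nonneg _, (Int.fract_lt_one _).le⟩, by
    rw [apply_rpow_fract_of_mulPeriodic hh hc (Real.logb_nonneg hc hy),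
      Real.rpow_logb (by linarith) hc.ne' (by linarith)]⟩

theorem sSup_eq_limsup_of_mulPeriodic (hh : ∀ x, 1 ≤ x → h (c * x) = h x) (hc : 1 < c)
    (hcont : ContinuousOn h (Ici 1)) {a : ℕ → ℝ} (ha : ∀ n, 1 ≤ n → a n = h n) {t₁ : ℝ}
    (ht₁ : t₁ ∈ Icc (0 : ℝ) 1) (hmax : IsMaxOn (fun t => h (c ^ t)) (Icc 0 1) t₁) :
    sSup {y | ∃ n, 1 ≤ n ∧ y = a n} = limsup a atTop ∧ limsup a atTop = h (c ^ t₁) := by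
  refine sSup_eq_limsup_of_mapClusterPt (fun n hn => ?_)
    (mapClusterPt_of_mulPeriodic hh hc hcont ha (Real.one_le_rpow hc.le ht₁.1))
  obtain ⟨t, ht, hnt⟩ := exists_mem_Icc_apply_eq_rpow_of_mulPeriodic hh hc (Nat.one_le_cast.2 hn)
  rw [ha n hn, hnt]
  exact hmax ht

theorem sInf_eq_liminf_of_mulPeriodic (hh : ∀ x, 1 ≤ x → h (c * x) = h x) (hc : 1 < c)
    (hcont : ContinuousOn h (Ici 1)) {a : ℕ → ℝ} (ha : ∀ n, 1 ≤ n → a n = h n) {t₂ : ℝ}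
    (ht₂ : t₂ ∈ Icc (0 : ℝ) 1) (hmin : IsMinOn (fun t => h (c ^ t)) (Icc 0 1) t₂) :
    sInf {y | ∃ n, 1 ≤ n ∧ y = a n} = liminf a atTop ∧ liminf a atTop = h (c ^ t₂) := by
  refine sInf_eq_liminf_of_mapClusterPt (fun n hn => ?_)
    (mapClusterPt_of_mulPeriodic hh hc hcont ha (Real.one_le_rpow hc.le ht₂.1))
  obtain ⟨t, ht, hnt⟩ := exists_mem_Icc_apply_eq_rpow_of_mulPeriodic hh hc (Nat.one_le_cast.2 hn)
  rw [ha n hn, hnt]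
  exact hmin ht

end MulPeriodic

theorem continuousOn_Ici_one_of_forall_Icc {g : ℝ → ℝ}
    (hg : ∀ n : ℕ, 1 ≤ n → ContinuousOn g (Icc n (n + 1))) : ContinuousOn g (Ici 1) := by
  have hIcc : ∀ N : ℕ, ContinuousOn g (Icc 1 (N + 1)) := by
    intro N
    induction N with
    | zero => simp
    | succ N ih =>
      have := ih.union_of_isClosed (hg (N + 1) (by omega)) isClosed_Icc isClosed_Icc
      push_cast at this ⊢
      rwa [Icc_union_Icc_eq_Icc (by linarith [N.cast_nonneg (α := ℝ)]) (by linarith)] at this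
  intro x hx
  refine ((hIcc ⌈x⌉₊ x ⟨hx, ?_⟩).mono_of_mem_nhdsWithin ?_)
  · linarith [Nat.le_ceil x]
  · exact inter_mem_nhdsWithin _ (Iic_mem_nhds (by linarith [Nat.le_ceil x]))

section DigitRecurrence
variable {p : ℕ} {γ : ℕ → ℝ} {A : ℝ} {φ : ℝ → ℝ} {f : ℕ → ℝ} {fext : ℝ → ℝ}

theorem recurrence_mul_add (hp : 0 < p)
    (hf : ∀ n : ℕ, p ≤ n → f n = ∑ j ∈ Finset.range p, γ j * f ((n + j) / p))
    {m j : ℕ} (hm : 1 ≤ m) (hj : j ≤ p) :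
    f (p * m + j) = (∑ i ∈ Finset.range p, γ i) * f m
      + (∑ i ∈ Finset.Ico (p - j) p, γ i) * (f (m + 1) - f m) := by
  have hdiv : ∀ i, (p * m + j + i) / p = m + (j + i) / p := fun i => by
    rw [add_assoc, Nat.mul_add_div hp]
  have hlow : ∀ i ∈ Finset.range (p - j), γ i * f ((p * m + j + i) / p) = γ i * f m :=
    fun i hi => by
      rw [Finset.mem_range] at hi
      rw [hdiv, Nat.div_eq_of_lt (by omega), add_zero]
  have hhigh : ∀ i ∈ Finset.Ico (p - j) p,
      γ i * f ((p * m + j + i) / p) = γ i * f m + γ i * (f (m + 1) - f m) := fun i hi => by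
    rw [Finset.mem_Ico] at hi
    rw [hdiv, Nat.div_eq_of_lt_le (k := 1) (by omega) (by omega)]
    ring
  rw [hf _ (by nlinarith), ← Finset.sum_range_add_sum_Ico _ (Nat.sub_le p j),
    ← Finset.sum_range_add_sum_Ico _ (Nat.sub_le p j), add_mul, Finset.sum_mul, Finset.sum_mul,
    Finset.sum_mul, Finset.sum_congr rfl hlow, Finset.sum_congr rfl hhigh, Finset.sum_add_distrib]
  ring

theorem fext_mul (hp : 0 < p) (hA : A = ∑ j ∈ Finset.range p, γ j) (hA0 : A ≠ 0)
    (hφeq : ∀ j < p, ∀ t : ℝ, (j : ℝ) / p ≤ t → t ≤ ((j : ℝ) + 1) / p →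
      φ t = γ (p - j - 1) / A * φ (p * t - j) + (∑ i ∈ Finset.Ico (p - j) p, γ i) / A)
    (hf : ∀ n : ℕ, p ≤ n → f n = ∑ j ∈ Finset.range p, γ j * f ((n + j) / p))
    (hfext : ∀ n : ℕ, 1 ≤ n → ∀ t ∈ Set.Icc (0 : ℝ) 1,
      fext ((n : ℝ) + t) = (1 - φ t) * f n + φ t * f (n + 1))
    {x : ℝ} (hx : 1 ≤ x) : fext (p * x) = A * fext x := by
  have hpR : (0 : ℝ) < p := by exact_mod_cast hp
  set m := ⌊x⌋₊
  set t := x - m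
  have hm : 1 ≤ m := Nat.le_floor (by exact_mod_cast hx)
  have ht : t ∈ Icc (0 : ℝ) 1 := ⟨by linarith [Nat.floor_le (by linarith : 0 ≤ x)],
    by linarith [Nat.lt_floor_add_one x]⟩
  have htp : p * t < p := by nlinarith [Nat.lt_floor_add_one x]
  set j := ⌊p * t⌋₊
  set s := p * t - j with hs_def
  have hj : j < p := (Nat.floor_lt (by nlinarith [ht.1])).2 (by exact_mod_cast htp)
  have hs : s ∈ Icc (0 : ℝ) 1 := ⟨by linarith [Nat.floor_le (by nlinarith [ht.1] : 0 ≤ p * t)],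
    by linarith [Nat.lt_floor_add_one (p * t)]⟩
  have hφt : A * φ t = γ (p - j - 1) * φ s + ∑ i ∈ Finset.Ico (p - j) p, γ i := by
    rw [hφeq j hj t (by rw [div_le_iff₀ hpR]; linarith [hs.1])
      (by rw [le_div_iff₀ hpR]; linarith [hs.2]), ← hs_def]
    field_simp
  have htail : ∑ i ∈ Finset.Ico (p - (j + 1)) p, γ i
      = γ (p - j - 1) + ∑ i ∈ Finset.Ico (p - j) p, γ i := by
    rw [Finset.sum_eq_sum_Ico_succ_bot (by omega), show p - (j + 1) + 1 = p - j by omega,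
      Nat.sub_sub]
  -- `x = m + t` and `p t = j + s`; the equation for `φ` on `[j / p, (j + 1) / p]` is exactly what
  -- matches the interpolation at `p x` between the values given by `recurrence_mul_add`.
  have hpx : (p : ℝ) * x = ((p * m + j : ℕ) : ℝ) + s := by push_cast; ring
  rw [hpx, hfext _ (by nlinarith) s hs, show x = m + t by ring, hfext m hm t ht,
    recurrence_mul_add hp hf hm hj.le, add_assoc, recurrence_mul_add hp hf hm hj, htail, ← hA]
  linear_combination (f m - f (m + 1)) * hφt

theorem fext_natCast (hφ0 : φ 0 = 0)
    (hfext : ∀ n : ℕ, 1 ≤ n → ∀ t ∈ Set.Icc (0 : ℝ) 1,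
      fext ((n : ℝ) + t) = (1 - φ t) * f n + φ t * f (n + 1))
    {n : ℕ} (hn : 1 ≤ n) : fext n = f n := by
  simpa [hφ0] using hfext n hn 0 (left_mem_Icc.2 zero_le_one)

theorem continuousOn_fext (hφc : ContinuousOn φ (Icc 0 1))
    (hfext : ∀ n : ℕ, 1 ≤ n → ∀ t ∈ Set.Icc (0 : ℝ) 1,
      fext ((n : ℝ) + t) = (1 - φ t) * f n + φ t * f (n + 1)) :
    ContinuousOn fext (Ici 1) := by
  refine continuousOn_Ici_one_of_forall_Icc fun n hn => ?_
  have hmaps : MapsTo (fun x : ℝ => x - n) (Icc (n : ℝ) (n + 1)) (Icc 0 1) :=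
    fun x hx => ⟨by linarith [hx.1], by linarith [hx.2]⟩
  have hφn : ContinuousOn (fun x => φ (x - n)) (Icc (n : ℝ) (n + 1)) :=
    hφc.comp (by fun_prop) hmaps
  refine ContinuousOn.congr (f := fun x => (1 - φ (x - n)) * f n + φ (x - n) * f (n + 1))
    (((continuousOn_const.sub hφn).mul continuousOn_const).add (hφn.mul continuousOn_const))
    fun x hx => ?_
  have := hfext n hn (x - n) (hmaps hx)
  rwa [add_sub_cancel] at this

end DigitRecurrence

theorem sup_inf_eq_max_min_P_general (p : ℕ) (hp : 2 ≤ p) (γ : ℕ → ℝ) (hγ : ∀ j < p, 0 < γ j)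
    (A : ℝ) (hA : A = ∑ j ∈ Finset.range p, γ j)
    (φ : ℝ → ℝ)
    (hφc : ContinuousOn φ (Set.Icc 0 1))
    (hφ0 : φ 0 = 0)
    (hφeq : ∀ j < p, ∀ t : ℝ, (j : ℝ) / p ≤ t → t ≤ ((j : ℝ) + 1) / p →
      φ t = γ (p - j - 1) / A * φ (p * t - j) + (∑ i ∈ Finset.Ico (p - j) p, γ i) / A)
    (f : ℕ → ℝ)
    (hf : ∀ n : ℕ, p ≤ n → f n = ∑ j ∈ Finset.range p, γ j * f ((n + j) / p))
    (fext : ℝ → ℝ)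
    (hfext : ∀ n : ℕ, 1 ≤ n → ∀ t ∈ Set.Icc (0 : ℝ) 1,
      fext ((n : ℝ) + t) = (1 - φ t) * f n + φ t * f (n + 1))
    (ρ : ℝ) (hρ : ρ = Real.log A / Real.log p)
    (P : ℝ → ℝ) (hP : ∀ t : ℝ, P t = A ^ (-(Int.fract t)) * fext ((p : ℝ) ^ Int.fract t))
    : ∃ t₁ ∈ Set.Icc (0 : ℝ) 1, ∃ t₂ ∈ Set.Icc (0 : ℝ) 1,
      (∀ t ∈ Set.Icc (0 : ℝ) 1, P t ≤ P t₁) ∧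
      (∀ t ∈ Set.Icc (0 : ℝ) 1, P t₂ ≤ P t) ∧
      sSup {y : ℝ | ∃ n : ℕ, 1 ≤ n ∧ y = f n / (n : ℝ) ^ ρ}
        = Filter.limsup (fun n : ℕ => f n / (n : ℝ) ^ ρ) Filter.atTop ∧
      Filter.limsup (fun n : ℕ => f n / (n : ℝ) ^ ρ) Filter.atTop = P t₁ ∧
      sInf {y : ℝ | ∃ n : ℕ, 1 ≤ n ∧ y = f n / (n : ℝ) ^ ρ}
        = Filter.liminf (fun n : ℕ => f n / (n : ℝ) ^ ρ) Filter.atTop ∧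
      Filter.liminf (fun n : ℕ => f n / (n : ℝ) ^ ρ) Filter.atTop = P t₂ := by
  have hp1 : (1 : ℝ) < p := by exact_mod_cast hp
  have hA0 : 0 < A := hA ▸ Finset.sum_pos (fun j hj => hγ j (Finset.mem_range.1 hj))
    ⟨0, Finset.mem_range.2 (by omega)⟩
  have hpρ : (p : ℝ) ^ ρ = A := by rw [hρ, ← Real.logb, Real.rpow_logb (by linarith) hp1.ne' hA0]
  obtain ⟨h, h_def⟩ : ∃ h : ℝ → ℝ, ∀ x, h x = fext x / x ^ ρ := ⟨_, fun _ => rfl⟩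
  have hh : ∀ x, 1 ≤ x → h (p * x) = h x := fun x hx => by
    rw [h_def, h_def, fext_mul (by omega) hA hA0.ne' hφeq hf hfext hx,
      Real.mul_rpow (by positivity) (by linarith), hpρ, mul_div_mul_left _ _ hA0.ne']
  have hcont : ContinuousOn h (Ici 1) :=
    ((continuousOn_fext hφc hfext).div
      (continuousOn_id.rpow_const fun _ hx => Or.inl (zero_lt_one.trans_le hx).ne')
      fun _ hx => (Real.rpow_pos_of_pos (zero_lt_one.trans_le hx) _).ne').congr fun x _ => h_def x
  have ha : ∀ n : ℕ, 1 ≤ n → f n / (n : ℝ) ^ ρ = h n := fun n hn => by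
    rw [h_def, fext_natCast hφ0 hfext hn]
  have hPh : ∀ t ∈ Icc (0 : ℝ) 1, P t = h (p ^ t) := fun t ht => by
    rw [hP, ← apply_rpow_fract_of_mulPeriodic hh hp1 ht.1, h_def, ← Real.rpow_mul (by positivity),
      mul_comm (Int.fract t), Real.rpow_mul (by positivity), hpρ, Real.rpow_neg hA0.le,
      inv_mul_eq_div]
  have hg : ContinuousOn (fun t : ℝ => h ((p : ℝ) ^ t)) (Icc 0 1) :=
    hcont.comp (Real.continuous_const_rpow (by positivity)).continuousOn
      fun t ht => mem_Ici.2 (Real.one_le_rpow hp1.le ht.1)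
  obtain ⟨t₁, ht₁, hmax⟩ := isCompact_Icc.exists_isMaxOn (nonempty_Icc.2 zero_le_one) hg
  obtain ⟨t₂, ht₂, hmin⟩ := isCompact_Icc.exists_isMinOn (nonempty_Icc.2 zero_le_one) hg
  obtain ⟨hsup, hlimsup⟩ := sSup_eq_limsup_of_mulPeriodic hh hp1 hcont ha ht₁ hmax
  obtain ⟨hinf, hliminf⟩ := sInf_eq_liminf_of_mulPeriodic hh hp1 hcont ha ht₂ hmin
  refine ⟨t₁, ht₁, t₂, ht₂, fun t ht => ?_, fun t ht => ?_, hsup, hlimsup.trans (hPh t₁ ht₁).symm,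
    hinf, hliminf.trans (hPh t₂ ht₂).symm⟩
  · rw [hPh t ht, hPh t₁ ht₁]
    exact hmax ht
  · rw [hPh t ht, hPh t₂ ht₂]
    exact hmin ht

theorem sup_inf_eq_max_min_P (p : ℕ) (hp : 2 ≤ p) (γ : ℕ → ℝ) (hγ : ∀ j < p, 0 < γ j)
    (A : ℝ) (hA : A = ∑ j ∈ Finset.range p, γ j)
    (φ : ℝ → ℝ)
    (hφc : ContinuousOn φ (Set.Icc 0 1)) (hφm : StrictMonoOn φ (Set.Icc 0 1))
    (hφ0 : φ 0 = 0) (hφ1 : φ 1 = 1)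
    (hφeq : ∀ j < p, ∀ t : ℝ, (j : ℝ) / p ≤ t → t ≤ ((j : ℝ) + 1) / p →
      φ t = γ (p - j - 1) / A * φ (p * t - j) + (∑ i ∈ Finset.Ico (p - j) p, γ i) / A)
    (f : ℕ → ℝ)
    (hf : ∀ n : ℕ, p ≤ n → f n = ∑ j ∈ Finset.range p, γ j * f ((n + j) / p))
    (fext : ℝ → ℝ)
    (hfext : ∀ n : ℕ, 1 ≤ n → ∀ t ∈ Set.Icc (0 : ℝ) 1,
      fext ((n : ℝ) + t) = (1 - φ t) * f n + φ t * f (n + 1))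
    (ρ : ℝ) (hρ : ρ = Real.log A / Real.log p)
    (P : ℝ → ℝ) (hP : ∀ t : ℝ, P t = A ^ (-(Int.fract t)) * fext ((p : ℝ) ^ Int.fract t))
    : ∃ t₁ ∈ Set.Icc (0 : ℝ) 1, ∃ t₂ ∈ Set.Icc (0 : ℝ) 1,
      (∀ t ∈ Set.Icc (0 : ℝ) 1, P t ≤ P t₁) ∧
      (∀ t ∈ Set.Icc (0 : ℝ) 1, P t₂ ≤ P t) ∧
      sSup {y : ℝ | ∃ n : ℕ, 1 ≤ n ∧ y = f n / (n : ℝ) ^ ρ}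
        = Filter.limsup (fun n : ℕ => f n / (n : ℝ) ^ ρ) Filter.atTop ∧
      Filter.limsup (fun n : ℕ => f n / (n : ℝ) ^ ρ) Filter.atTop = P t₁ ∧
      sInf {y : ℝ | ∃ n : ℕ, 1 ≤ n ∧ y = f n / (n : ℝ) ^ ρ}
        = Filter.liminf (fun n : ℕ => f n / (n : ℝ) ^ ρ) Filter.atTop ∧
      Filter.liminf (fun n : ℕ => f n / (n : ℝ) ^ ρ) Filter.atTop = P t₂ :=
  sup_inf_eq_max_min_P_general p hp γ hγ A hA φ hφc hφ0 hφeq f hf fext hfext ρ hρ P hP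
end
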